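/- For every fixed integer k ≥ 1, (k+1) * log M(x,k) ~ log x as x → ∞; that is, the ratio (k+1) * log M(x,k) / log x tends to 1. -/
import Mathlib


open Filter Real

/-- `nthPrime n` is the `(n+1)`-st prime number `p_{n+1}` (so `nthPrime 0 = 2`). -/
noncomputable def nthPrime (n : ℕ) : ℕ := Nat.nth Nat.Prime n

/-- `M(x,k)`: the largest integer `M ≥ 1` with `p_1^k + ⋯ + p_M^k ≤ x`. -/
noncomputable def Mxk (k : ℕ) (x : ℝ) : ℕ :=
  sSup {M : ℕ | 1 ≤ M ∧ ((∑ i ∈ Finset.range M, (nthPrime i) ^ k : ℕ) : ℝ) ≤ x}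

noncomputable def Sk (k M : ℕ) : ℕ := ∑ i ∈ Finset.range M, nthPrime i ^ k

lemma nthPrime_ge (i : ℕ) : i ≤ nthPrime i := by
  have := Nat.add_two_le_nth_prime i
  simpa [nthPrime] using by omega

lemma nthPrime_two_le (i : ℕ) : 2 ≤ nthPrime i :=
  (Nat.prime_nth_prime i).two_le

lemma Sk_lower (k M : ℕ) : (M/2) ^ (k+1) ≤ Sk k M := by
  set f := M/2 with hf
  have hsub : Finset.Ico f M ⊆ Finset.range M := by
    intro i hi
    simp only [Finset.mem_Ico] at hi
    exact Finset.mem_range.mpr hi.2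
  calc f ^ (k+1) = f * f^k := by rw [pow_succ]; ring
    _ ≤ (M - f) * f^k := Nat.mul_le_mul_right _ (by omega)
    _ = (Finset.Ico f M).card * f^k := by rw [Nat.card_Ico]
    _ ≤ ∑ i ∈ Finset.Ico f M, nthPrime i ^ k := by
        refine Finset.card_nsmul_le_sum _ _ _ ?_ |>.trans_eq rfl |>.trans_eq rfl |>.trans le_rfl
        intro i hi
        simp only [Finset.mem_Ico] at hi
        exact Nat.pow_le_pow_left ((hi.1).trans (nthPrime_ge i)) k
    _ ≤ Sk k M := Finset.sum_le_sum_of_subset hsub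

lemma Sk_upper (k M : ℕ) : Sk (k) (M+1) ≤ (M+1) * nthPrime M ^ k := by
  calc Sk k (M+1) ≤ ∑ _i ∈ Finset.range (M+1), nthPrime M ^ k := by
        apply Finset.sum_le_sum
        intro i hi
        refine Nat.pow_le_pow_left ?_ k
        exact Nat.nth_monotone Nat.infinite_setOf_prime (Nat.lt_succ_iff.mp (Finset.mem_range.mp hi))
    _ = (M+1) * nthPrime M ^ k := by simp [Finset.sum_const, Finset.card_range]

lemma Sk_ge_self (k M : ℕ) : M ≤ Sk k M := by
  calc M = ∑ _i ∈ Finset.range M, 1 := by simp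
    _ ≤ Sk k M := Finset.sum_le_sum fun i _ => Nat.one_le_pow _ _ (by have := nthPrime_two_le i; omega)

lemma Mxk_spec (k : ℕ) {x : ℝ} (hx : ((Sk k 1 : ℕ) : ℝ) ≤ x) :
    1 ≤ Mxk k x ∧ ((Sk k (Mxk k x) : ℕ) : ℝ) ≤ x ∧ x < ((Sk k (Mxk k x + 1) : ℕ) : ℝ) := by
  set A := {M : ℕ | 1 ≤ M ∧ ((Sk k M : ℕ) : ℝ) ≤ x} with hA
  have hAeq : Mxk k x = sSup A := rfl
  have hne : A.Nonempty := ⟨1, le_rfl, hx⟩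
  have hbdd : BddAbove A := by
    refine ⟨⌊x⌋₊, fun M hM => ?_⟩
    have h1 : (M:ℝ) ≤ x := le_trans (by exact_mod_cast Sk_ge_self k M) hM.2
    exact Nat.le_floor h1
  have hmem : sSup A ∈ A := Nat.sSup_mem hne hbdd
  refine ⟨hmem.1, hmem.2, ?_⟩
  by_contra hcon
  push_neg at hcon
  have : sSup A + 1 ∈ A := ⟨by omega, hcon⟩
  have := le_csSup hbdd this
  omega

lemma Mxk_tendsto (k : ℕ) : Tendsto (Mxk k) atTop atTop := by
  rw [tendsto_atTop]
  intro N
  filter_upwards [eventually_ge_atTop ((Sk k (max N 1) : ℕ) : ℝ)] with x hxx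
  set N' := max N 1
  have hS1 : ((Sk k 1 : ℕ) : ℝ) ≤ ((Sk k N' : ℕ) : ℝ) := by
    have : Sk k 1 ≤ Sk k N' := by
      apply Finset.sum_le_sum_of_subset
      exact Finset.range_subset_range.mpr (le_max_right N 1)
    exact_mod_cast this
  have hmem : N' ∈ {M : ℕ | 1 ≤ M ∧ ((Sk k M : ℕ) : ℝ) ≤ x} := ⟨le_max_right N 1, hxx⟩
  have hbdd : BddAbove {M : ℕ | 1 ≤ M ∧ ((Sk k M : ℕ) : ℝ) ≤ x} := by
    refine ⟨⌊x⌋₊, fun M hM => ?_⟩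
    have h1 : (M:ℝ) ≤ x := le_trans (by exact_mod_cast Sk_ge_self k M) hM.2
    exact Nat.le_floor h1
  have := le_csSup hbdd hmem
  calc N ≤ N' := le_max_left N 1
    _ ≤ Mxk k x := this

lemma centralBinom_le_pow (n : ℕ) (hn : 1 ≤ n) :
    Nat.centralBinom n ≤ (2*n) ^ (Nat.primeCounting (2*n)) := by
  have h0 : Nat.centralBinom n ≠ 0 := Nat.centralBinom_ne_zero n
  have h2n : 0 < 2*n := by omega
  have hcard : (Nat.centralBinom n).factorization.support.card ≤ Nat.primeCounting (2*n) := by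
    have hsub : (Nat.centralBinom n).factorization.support ⊆ Nat.primesBelow (2*n+1) := by
      intro p hp
      have hpp : p.Prime := Nat.prime_of_mem_primeFactors (by rwa [Nat.support_factorization] at hp)
      have hple : p ≤ 2*n := by
        by_contra hgt
        push_neg at hgt
        have := Nat.factorization_centralBinom_eq_zero_of_two_mul_lt (p := p) (n := n) hgt
        simp only [Finsupp.mem_support_iff] at hp
        exact hp this
      exact Nat.mem_primesBelow.mpr ⟨by omega, hpp⟩
    calc (Nat.centralBinom n).factorization.support.card
        ≤ (Nat.primesBelow (2*n+1)).card := Finset.card_le_card hsub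
      _ = Nat.primeCounting' (2*n+1) := Nat.primesBelow_card_eq_primeCounting' _
      _ = Nat.primeCounting (2*n) := rfl
  calc Nat.centralBinom n
      = ∏ p ∈ (Nat.centralBinom n).factorization.support,
          p ^ (Nat.centralBinom n).factorization p := by
        conv_lhs => rw [← Nat.factorization_prod_pow_eq_self h0]
        rfl
    _ ≤ ∏ _p ∈ (Nat.centralBinom n).factorization.support, (2*n) := by
        apply Finset.prod_le_prod' 
        intro p _
        rw [Nat.centralBinom_eq_two_mul_choose]
        exact Nat.pow_factorization_choose_le h2n
    _ = (2*n) ^ (Nat.centralBinom n).factorization.support.card := Finset.prod_const _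
    _ ≤ (2*n) ^ (Nat.primeCounting (2*n)) := Nat.pow_le_pow_right h2n hcard

lemma four_pow_le_pow_pi (n : ℕ) (hn : 4 ≤ n) :
    4 ^ n ≤ (2*n) ^ (Nat.primeCounting (2*n) + 1) := by
  calc 4 ^ n ≤ n * Nat.centralBinom n := (Nat.four_pow_lt_mul_centralBinom n hn).le
    _ ≤ (2*n) * (2*n) ^ (Nat.primeCounting (2*n)) :=
        Nat.mul_le_mul (by omega) (centralBinom_le_pow n (by omega))
    _ = (2*n) ^ (Nat.primeCounting (2*n) + 1) := by rw [pow_succ]; ring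

lemma pi_lower {N : ℕ} (hN : 8 ≤ N) :
    ((N:ℝ) - 1) * Real.log 2 ≤ ((Nat.primeCounting N : ℝ) + 1) * Real.log N := by
  set n := N / 2 with hn
  have h4n : 4 ≤ n := by omega
  have h2n : 2*n ≤ N := by omega
  have h2n' : N ≤ 2*n + 1 := by omega
  have hnat : 4 ^ n ≤ N ^ (Nat.primeCounting N + 1) := by
    calc 4 ^ n ≤ (2*n) ^ (Nat.primeCounting (2*n) + 1) := four_pow_le_pow_pi n h4n
      _ ≤ N ^ (Nat.primeCounting N + 1) :=
        Nat.pow_le_pow_left h2n _ |>.trans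
          (Nat.pow_le_pow_right (by omega)
            (by exact Nat.add_le_add_right (Nat.monotone_primeCounting h2n) 1))
  have hreal : (4:ℝ) ^ n ≤ (N:ℝ) ^ (Nat.primeCounting N + 1) := by
    exact_mod_cast Nat.cast_le.mpr hnat
  have hlog := Real.log_le_log (by positivity) hreal
  rw [Real.log_pow, Real.log_pow] at hlog
  have h4 : Real.log 4 = 2 * Real.log 2 := by
    rw [show (4:ℝ) = 2^2 by norm_num, Real.log_pow]; push_cast; ring
  have hnlb : ((N:ℝ) - 1) ≤ 2 * n := by
    have : (N:ℝ) ≤ 2*(n:ℝ) + 1 := by exact_mod_cast h2n'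
    linarith
  have hl2 : 0 ≤ Real.log 2 := Real.log_nonneg (by norm_num)
  calc ((N:ℝ) - 1) * Real.log 2 ≤ (2*(n:ℝ)) * Real.log 2 := by
        apply mul_le_mul_of_nonneg_right hnlb hl2
    _ = (n:ℝ) * Real.log 4 := by rw [h4]; ring
    _ ≤ (Nat.primeCounting N + 1) * Real.log N := by exact_mod_cast hlog

lemma nthPrime_le_of (m N : ℕ) (hN : 8 ≤ N)
    (h : ((m:ℝ) + 2) * Real.log N ≤ ((N:ℝ) - 1) * Real.log 2) :
    nthPrime m ≤ N := by
  have hlogN : 0 < Real.log N := Real.log_pos (by exact_mod_cast (by omega : 1 < N))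
  have h2 : ((m:ℝ) + 2) * Real.log N ≤ ((Nat.primeCounting N : ℝ) + 1) * Real.log N :=
    h.trans (pi_lower hN)
  have h3 : (m:ℝ) + 2 ≤ (Nat.primeCounting N : ℝ) + 1 :=
    le_of_mul_le_mul_right h2 hlogN
  have h4 : m + 1 ≤ Nat.primeCounting N := by exact_mod_cast (by linarith : (m:ℝ) + 1 ≤ (Nat.primeCounting N : ℝ))
  have h5 : m < Nat.count Nat.Prime (N+1) := by
    have : Nat.primeCounting N = Nat.count Nat.Prime (N+1) := rfl
    omega
  have := Nat.nth_lt_of_lt_count h5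
  simpa [nthPrime] using Nat.lt_succ_iff.mp this

lemma tendsto_rpow_div_log (ε : ℝ) (hε : 0 < ε) :
    Tendsto (fun m : ℕ => (m:ℝ)^ε / Real.log m) atTop atTop := by
  have h1 : Tendsto (fun x : ℝ => Real.log x / x^ε) atTop (nhds 0) :=
    (isLittleO_log_rpow_atTop hε).tendsto_div_nhds_zero
  have h2 : ∀ᶠ x : ℝ in atTop, 0 < Real.log x / x^ε := by
    filter_upwards [eventually_gt_atTop 1] with x hx
    exact div_pos (Real.log_pos hx) (Real.rpow_pos_of_pos (by linarith) ε)
  have h3 : Tendsto (fun x : ℝ => Real.log x / x^ε) atTop (nhdsWithin 0 (Set.Ioi 0)) :=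
    tendsto_nhdsWithin_of_tendsto_nhds_of_eventually_within _ h1 h2
  have h4 : Tendsto (fun x : ℝ => (Real.log x / x^ε)⁻¹) atTop atTop :=
    h3.inv_tendsto_nhdsGT_zero
  have h5 : Tendsto (fun x : ℝ => x^ε / Real.log x) atTop atTop := by
    refine h4.congr' ?_
    filter_upwards [eventually_gt_atTop 1] with x _
    rw [inv_div]
  exact h5.comp tendsto_natCast_atTop_atTop

lemma log_nthPrime_le (ε : ℝ) (hε : 0 < ε) :
    ∀ᶠ m : ℕ in atTop, Real.log (nthPrime m) ≤ (1+ε) * Real.log m := by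
  have hC : ∀ᶠ m : ℕ in atTop, 8*(1+ε)/Real.log 2 ≤ (m:ℝ)^ε / Real.log m :=
    (tendsto_rpow_div_log ε hε).eventually_ge_atTop _
  have hY : Tendsto (fun m : ℕ => (m:ℝ)^(1+ε)) atTop atTop :=
    (tendsto_rpow_atTop (by linarith)).comp tendsto_natCast_atTop_atTop
  filter_upwards [hC, hY.eventually_ge_atTop 16, eventually_ge_atTop 2] with m hCm hy16 hm2
  set y := (m:ℝ)^(1+ε) with hy
  have hmpos : (0:ℝ) < m := by exact_mod_cast (by omega : 0 < m)
  have hm1 : (1:ℝ) ≤ m := by exact_mod_cast (by omega : 1 ≤ m)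
  have hlogm : 0 < Real.log m := Real.log_pos (by exact_mod_cast (by omega : 1 < m))
  set N := ⌊y⌋₊ with hN
  have hNy : (N:ℝ) ≤ y := Nat.floor_le (by positivity)
  have hyN : y - 1 ≤ N := by
    have := Nat.sub_one_lt_floor y
    linarith [(Nat.lt_floor_add_one y)]
  have hN8 : 8 ≤ N := by
    have : (8:ℝ) ≤ N := by linarith
    exact_mod_cast this
  have hNpos : (1:ℝ) < N := by
    have : (8:ℝ) ≤ N := by exact_mod_cast hN8
    linarith
  -- key inequality
  have hkey : ((m:ℝ) + 2) * Real.log N ≤ ((N:ℝ) - 1) * Real.log 2 := by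
    have hlogN : Real.log N ≤ (1+ε) * Real.log m := by
      calc Real.log N ≤ Real.log y := Real.log_le_log (by linarith) hNy
        _ = (1+ε) * Real.log m := Real.log_rpow hmpos _
    have hNlb : y/4 ≤ (N:ℝ) - 1 := by linarith
    have hl2 : 0 < Real.log 2 := Real.log_pos (by norm_num)
    have hy_eq : y = (m:ℝ) * (m:ℝ)^ε := by
      rw [hy, Real.rpow_add hmpos, Real.rpow_one]
    have hmain : ((m:ℝ) + 2) * ((1+ε) * Real.log m) ≤ (y/4) * Real.log 2 := by
      have h1 : 8*(1+ε)/Real.log 2 * Real.log m ≤ (m:ℝ)^ε :=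
        (le_div_iff₀ hlogm).mp hCm
      have hm2' : (m:ℝ) + 2 ≤ 2 * m := by exact_mod_cast (by push_cast; linarith [(show (2:ℝ) ≤ m by exact_mod_cast hm2)] : (m:ℝ) + 2 ≤ 2*m)
      have h2' : ((m:ℝ) + 2) * ((1+ε) * Real.log m) ≤ 2*(m:ℝ) * ((1+ε) * Real.log m) := by
        have : 0 ≤ (1+ε) * Real.log m := by positivity
        nlinarith
      have h1' : 8*(1+ε)*Real.log m ≤ (m:ℝ)^ε * Real.log 2 := by
        rw [div_mul_eq_mul_div, div_le_iff₀ hl2] at h1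
        linarith
      have h3' : 2*(m:ℝ) * ((1+ε) * Real.log m) ≤ (y/4) * Real.log 2 := by
        rw [hy_eq]
        nlinarith [mul_le_mul_of_nonneg_left h1' hmpos.le]
      linarith
    calc ((m:ℝ) + 2) * Real.log N ≤ ((m:ℝ) + 2) * ((1+ε) * Real.log m) := by
          apply mul_le_mul_of_nonneg_left hlogN (by positivity)
      _ ≤ (y/4) * Real.log 2 := hmain
      _ ≤ ((N:ℝ) - 1) * Real.log 2 := mul_le_mul_of_nonneg_right hNlb hl2.le
  have hple := nthPrime_le_of m N hN8 hkey
  calc Real.log (nthPrime m) ≤ Real.log N := Real.log_le_log (by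
        exact_mod_cast Nat.Prime.pos (Nat.prime_nth_prime m)) (by exact_mod_cast hple)
    _ ≤ Real.log y := Real.log_le_log (by linarith) hNy
    _ = (1+ε) * Real.log m := Real.log_rpow hmpos _

set_option maxHeartbeats 2000000 in
/-- For fixed `k ≥ 1`, `(k+1) log M(x,k) ~ log x` as `x → ∞`. -/
theorem log_Mxk_asymptotic (k : ℕ) (hk : 1 ≤ k) :
    Filter.Tendsto
      (fun x : ℝ => ((k : ℝ) + 1) * Real.log (Mxk k x) / Real.log x)
      Filter.atTop (nhds 1) := by
  rw [Metric.tendsto_nhds]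
  intro ε hε
  set ε' : ℝ := min (ε/4) (1/2) with hε'def
  have hε' : 0 < ε' := lt_min (by linarith) (by norm_num)
  have hε'le : ε' ≤ ε/4 := min_le_left _ _
  have hε'half : ε' ≤ 1/2 := min_le_right _ _
  have hk1 : (1:ℝ) ≤ (k:ℝ) := by exact_mod_cast hk
  have hkpos : (0:ℝ) < (k:ℝ) + 1 := by linarith
  set A : ℝ := Real.log 3 + Real.log 3 / ε' + 2 / (ε' * ((k:ℝ)+1)) + 2 with hAdef
  have hlog3 : (0:ℝ) ≤ Real.log 3 := Real.log_nonneg (by norm_num)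
  have hAlog3 : Real.log 3 + Real.log 3 / ε' ≤ A := by
    have : 0 ≤ 2 / (ε' * ((k:ℝ)+1)) := by positivity
    simp only [hAdef]; linarith
  have hA2 : 2 / (ε' * ((k:ℝ)+1)) ≤ A := by
    have h1 : 0 ≤ Real.log 3 / ε' := by positivity
    simp only [hAdef]; linarith
  filter_upwards [eventually_ge_atTop ((Sk k 1 : ℕ) : ℝ), eventually_ge_atTop (3:ℝ),
      (Mxk_tendsto k).eventually (log_nthPrime_le ε' hε'),
      ((Real.tendsto_log_atTop.comp (tendsto_natCast_atTop_atTop.comp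
        (Mxk_tendsto k))).eventually_ge_atTop A),
      (Mxk_tendsto k).eventually (eventually_ge_atTop 3)] with x e1 e2 e3 e4 e5
  obtain ⟨hM1, hSle, hSgt⟩ := Mxk_spec k e1
  set M := Mxk k x with hMdef
  have hlogMA : A ≤ Real.log M := e4
  have hlogMpos : (0:ℝ) < Real.log M := by
    have h1 : (0:ℝ) ≤ Real.log 3 / ε' := by positivity
    have h2 : (0:ℝ) ≤ 2 / (ε' * ((k:ℝ)+1)) := by positivity
    have : (2:ℝ) ≤ A := by simp only [hAdef]; linarith
    linarith
  have hlogxpos : (0:ℝ) < Real.log x :=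
    lt_of_lt_of_le (Real.log_pos (by norm_num)) (Real.log_le_log (by norm_num) e2)
  -- lower bound on log x
  have hM3 : 3 ≤ M := e5
  have hM3R : (3:ℝ) ≤ (M:ℝ) := by exact_mod_cast hM3
  set f : ℕ := M/2 with hfdef
  have hf2 : M ≤ 2*f + 1 := by omega
  have hf2R : (M:ℝ) ≤ 2*(f:ℝ) + 1 := by exact_mod_cast hf2
  have hflb : (M:ℝ)/3 ≤ (f:ℝ) := by linarith
  have hfpos : (0:ℝ) < (f:ℝ) := by linarith
  have hxlb : ((f:ℝ))^(k+1) ≤ x := by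
    have h1 : ((f ^ (k+1) : ℕ) : ℝ) ≤ ((Sk k M : ℕ) : ℝ) := by exact_mod_cast Sk_lower k M
    push_cast at h1
    linarith [hSle]
  have hL : ((k:ℝ)+1) * (Real.log M - Real.log 3) ≤ Real.log x := by
    have h1 : Real.log ((f:ℝ)^(k+1)) ≤ Real.log x := Real.log_le_log (by positivity) hxlb
    rw [Real.log_pow] at h1
    have h2 : Real.log ((M:ℝ)/3) ≤ Real.log f := Real.log_le_log (by linarith) hflb
    rw [Real.log_div (by linarith) (by norm_num)] at h2
    have h3 : ((k:ℝ)+1) * (Real.log M - Real.log 3) ≤ ((k:ℝ)+1) * Real.log f :=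
      mul_le_mul_of_nonneg_left h2 (by linarith)
    calc ((k:ℝ)+1) * (Real.log M - Real.log 3) ≤ ((k:ℝ)+1) * Real.log f := h3
      _ = ((k+1 : ℕ):ℝ) * Real.log f := by push_cast; ring
      _ ≤ Real.log x := h1
  -- upper bound on log x
  have hU : Real.log x ≤ (1 + 2*ε') * (((k:ℝ)+1) * Real.log M) := by
    have hup : x < ((M+1 : ℕ):ℝ) * ((nthPrime M : ℕ):ℝ)^k := by
      have h1 : ((Sk k (M+1) : ℕ):ℝ) ≤ (((M+1) * nthPrime M ^ k : ℕ):ℝ) := by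
        exact_mod_cast Sk_upper k M
      push_cast at h1 ⊢
      linarith [hSgt]
    have hppos : (0:ℝ) < ((nthPrime M : ℕ):ℝ) := by
      have := nthPrime_two_le M; exact_mod_cast by omega
    have h2 : Real.log x ≤ Real.log (((M+1:ℕ):ℝ)) + (k:ℝ) * Real.log (nthPrime M) := by
      have := Real.log_le_log (by linarith : (0:ℝ) < x) hup.le
      rwa [Real.log_mul (by positivity) (by positivity), Real.log_pow] at this
    have h3 : Real.log (((M+1:ℕ):ℝ)) ≤ Real.log M + Real.log 2 := by
      have : ((M+1:ℕ):ℝ) ≤ 2*(M:ℝ) := by push_cast; linarith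
      calc Real.log (((M+1:ℕ):ℝ)) ≤ Real.log (2*(M:ℝ)) := Real.log_le_log (by push_cast; linarith) this
        _ = Real.log 2 + Real.log M := Real.log_mul (by norm_num) (by linarith)
        _ = Real.log M + Real.log 2 := by ring
    have h4 : Real.log (nthPrime M) ≤ (1+ε') * Real.log M := e3
    have hlog2 : Real.log 2 ≤ 1 := by
      have := Real.log_le_sub_one_of_pos (by norm_num : (0:ℝ) < 2)
      linarith
    have hεL : 2 ≤ ε' * (((k:ℝ)+1) * Real.log M) := by
      have h5 : 2 / (ε' * ((k:ℝ)+1)) ≤ Real.log M := le_trans hA2 hlogMA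
      rw [div_le_iff₀ (by positivity)] at h5
      nlinarith
    have h6 : (k:ℝ) * Real.log (nthPrime M) ≤ (k:ℝ) * ((1+ε') * Real.log M) :=
      mul_le_mul_of_nonneg_left h4 (by linarith)
    set t : ℝ := Real.log M with htdef
    have hεt : 0 ≤ ε' * t := by positivity
    have h7 : (k:ℝ)*(ε'*t) ≤ ((k:ℝ)+1)*(ε'*t) :=
      mul_le_mul_of_nonneg_right (by linarith) hεt
    have h8 : Real.log 2 ≤ ε'*(((k:ℝ)+1)*t) := by
      have : ε' * (((k:ℝ)+1)*t) = ε' * (((k:ℝ)+1) * Real.log M) := rfl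
      linarith [hεL]
    calc Real.log x ≤ t + Real.log 2 + (k:ℝ)*((1+ε')*t) := by linarith
      _ = ((k:ℝ)+1)*t + (k:ℝ)*(ε'*t) + Real.log 2 := by ring
      _ ≤ ((k:ℝ)+1)*t + ((k:ℝ)+1)*(ε'*t) + ε'*(((k:ℝ)+1)*t) := by linarith
      _ = (1+2*ε')*(((k:ℝ)+1)*t) := by ring
  -- conclude
  set L0 : ℝ := ((k:ℝ)+1) * Real.log M with hL0def
  have hL0pos : 0 < L0 := mul_pos hkpos hlogMpos
  have hratio_hi : L0 / Real.log x ≤ 1 + ε' := by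
    rw [div_le_iff₀ hlogxpos]
    have hεlog3 : ((k:ℝ)+1) * Real.log 3 ≤ ε' * Real.log x := by
      have h1 : Real.log 3 + Real.log 3 / ε' ≤ Real.log M := le_trans hAlog3 hlogMA
      have h2 : ((k:ℝ)+1) * (Real.log 3 / ε') ≤ Real.log x := by
        have : ((k:ℝ)+1) * (Real.log 3 / ε') ≤ ((k:ℝ)+1) * (Real.log M - Real.log 3) :=
          mul_le_mul_of_nonneg_left (by linarith) (by linarith)
        linarith [hL]
      have h3 := mul_le_mul_of_nonneg_left h2 hε'.le
      rw [mul_comm ε' (((k:ℝ)+1) * (Real.log 3 / ε'))] at h3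
      have : ((k:ℝ)+1) * (Real.log 3 / ε') * ε' = ((k:ℝ)+1) * Real.log 3 := by
        field_simp
      linarith [h3, this ▸ h3]
    calc L0 ≤ Real.log x + ((k:ℝ)+1) * Real.log 3 := by simp only [hL0def]; nlinarith [hL]
      _ ≤ Real.log x + ε' * Real.log x := by linarith
      _ = (1+ε') * Real.log x := by ring
  have hratio_lo : 1 - 2*ε' ≤ L0 / Real.log x := by
    rw [le_div_iff₀ hlogxpos]
    have h9 : (1-2*ε') * Real.log x ≤ (1-2*ε')*((1+2*ε')*L0) :=
      mul_le_mul_of_nonneg_left hU (by linarith)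
    have h10 : (1-2*ε')*((1+2*ε')*L0) = L0 - 4*(ε'^2*L0) := by ring
    have h11 : 0 ≤ ε'^2 * L0 := by positivity
    linarith
  rw [Real.dist_eq, abs_sub_lt_iff]
  constructor
  · calc ((k:ℝ)+1) * Real.log M / Real.log x - 1 ≤ (1+ε') - 1 := by linarith [hratio_hi]
      _ < ε := by linarith
  · calc 1 - ((k:ℝ)+1) * Real.log M / Real.log x ≤ 1 - (1-2*ε') := by linarith [hratio_lo]
      _ < ε := by linarith
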